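/- In the underlying undirected graph of G_1, every path from vertex 1 to vertex 9 that avoids the vertices 2, 5 and 8 must use the unique such path, and this path passes through all of the vertices 3, 4, 6, 7. Consequently, for any subgraph H of the bunkbed graph \overline{G_1} whose post set P(H) strictly contains \{2,5,8\}, every undirected path from 1^- to 9^- or 9^+ in H passes through a post. -/

import Mathlib

/-- Edges of the bunkbed graph of a directed graph on vertex type `V`:
`horiz u v ε` is the copy of the directed edge `(u,v)` in bunk `ε`
(`false` = lower bunk `-`, `true` = upper bunk `+`); `vert w` is the
bidirected vertical edge `(w⁻, w⁺)`. -/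
inductive BBEdge (V : Type) : Type
  | horiz : V → V → Bool → BBEdge V
  | vert  : V → BBEdge V
deriving DecidableEq

/-- The `F`-mirroring map on single edges: vertical edges are fixed, a horizontal
edge whose shadow lies in `F` is sent to its mirrored copy in the other bunk, and
horizontal edges with shadow outside `F` are fixed. -/
def mir {V : Type} [DecidableEq V] (F : Finset (V × V)) : BBEdge V → BBEdge V
  | .horiz u v ε => if (u, v) ∈ F then .horiz u v (!ε) else .horiz u v ε
  | .vert w => .vert w

/-- The `F`-mirrored subgraph `M(H,F)`. -/
def M {V : Type} [DecidableEq V] (H : Finset (BBEdge V)) (F : Finset (V × V)) :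
    Finset (BBEdge V) :=
  H.image (mir F)
/-- The edge set of the bunkbed graph of the directed graph with vertex set `Vs`
and edge set `E`: the vertical edges at all vertices together with the two
horizontal copies of each edge. -/
def bbEdges {V : Type} [DecidableEq V] (Vs : Finset V) (E : Finset (V × V)) :
    Finset (BBEdge V) :=
  Vs.image BBEdge.vert ∪ E.image (fun p => BBEdge.horiz p.1 p.2 false) ∪
    E.image (fun p => BBEdge.horiz p.1 p.2 true)

/-- One step of directed traversal in a subgraph `H` of the bunkbed graph:
horizontal edges are used in their direction within a bunk, and vertical edges
may be traversed in both directions. Vertices of the bunkbed graph are pairs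
`(w, ε)` with `ε : Bool` the bunk label (`false` = `-`, `true` = `+`). -/
def bbStep {V : Type} [DecidableEq V] (H : Finset (BBEdge V)) :
    V × Bool → V × Bool → Prop := fun a b =>
  (a.1 = b.1 ∧ a.2 ≠ b.2 ∧ BBEdge.vert a.1 ∈ H) ∨
    (a.2 = b.2 ∧ BBEdge.horiz a.1 b.1 a.2 ∈ H)

/-- Directed reachability `x → y` in a subgraph of the bunkbed graph. -/
def bbReach {V : Type} [DecidableEq V] (H : Finset (BBEdge V))
    (a b : V × Bool) : Prop :=
  Relation.ReflTransGen (bbStep H) a b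
/-- The conditioning event of the conditioned bunkbed model `𝓔_T`: all vertices
of `T` are posts. -/
def postCond {V : Type} [DecidableEq V] (T : Finset V)
    (H : Finset (BBEdge V)) : Prop :=
  ∀ t ∈ T, BBEdge.vert t ∈ H

/-- The edge set of the graph `G₁` of Przybyłowski's counterexample, on
vertices `1,…,9`. -/
def E1 : Finset (ℕ × ℕ) :=
  {(1,2), (1,4), (2,3), (3,4), (4,5), (3,7), (5,6), (6,7), (6,9), (7,8), (8,9)}

/-- The vertex set of `G₁`. -/
def V1 : Finset ℕ := {1, 2, 3, 4, 5, 6, 7, 8, 9}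

/-- The conditioning set `T = {2,5,8}`. -/
def T1 : Finset ℕ := {2, 5, 8}

/-- The edge set of the bunkbed graph of `G₁`. -/
def s1 : Finset (BBEdge ℕ) := bbEdges V1 E1

/-!
Deleting `T1 = {2, 5, 8}` from `G₁` leaves exactly the path `1 - 4 - 3 - 7 - 6 - 9`: every edge
of `G₁` avoiding `T1` joins two consecutive vertices of it. Numbering these vertices `0, …, 5`
turns a walk from `1` to `9` avoiding `T1` into a walk on `ℕ` with steps `±1` from `0` to `5`;
such a walk visits every value in between, and if it repeats no value it is `0, 1, …, 5`.
A walk in a bunkbed subgraph `H` that meets no post uses no vertical edge, so its shadow is a walk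
in `G₁` avoiding the posts, hence avoiding `T1`; it then visits every vertex of `V1 \ T1`,
in particular the post outside `T1`, which is absurd.
-/

def UnitStep (a b : ℕ) : Prop := b = a + 1 ∨ a = b + 1

theorem mem_of_isChain_unitStep :
    ∀ {l : List ℕ} {a b c : ℕ}, l.IsChain UnitStep → l.head? = some a → l.getLast? = some b →
      a ≤ c → c ≤ b → c ∈ l
  | [], _, _, _, _, ha, _, _, _ => by simp at ha
  | [x], a, b, c, _, ha, hb, hac, hcb => by
      simp only [List.head?_cons, List.getLast?_singleton, Option.some.injEq] at ha hb
      simp only [List.mem_singleton]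
      omega
  | x :: y :: t, a, b, c, hl, ha, hb, hac, hcb => by
      rw [List.isChain_cons_cons] at hl
      simp only [List.head?_cons, Option.some.injEq] at ha
      rw [List.getLast?_cons_cons] at hb
      rcases Nat.eq_or_lt_of_le hac with rfl | hlt
      · simp [ha]
      · have hyc : y ≤ c := by rcases hl.1 with h | h <;> omega
        exact List.mem_cons_of_mem x (mem_of_isChain_unitStep hl.2 rfl hb hyc hcb)

theorem eq_range'_of_isChain_unitStep :
    ∀ {l : List ℕ} {a b : ℕ}, l.IsChain UnitStep → l.Nodup → l.head? = some a →
      l.getLast? = some b → a ≤ b → l = List.range' a (b + 1 - a)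
  | [], _, _, _, _, ha, _, _ => by simp at ha
  | [x], a, b, _, _, ha, hb, _ => by
      simp only [List.head?_cons, List.getLast?_singleton, Option.some.injEq] at ha hb
      subst ha hb
      simp
  | x :: y :: t, a, b, hl, hnd, ha, hb, hab => by
      rw [List.isChain_cons_cons] at hl
      simp only [List.head?_cons, Option.some.injEq] at ha
      subst ha
      rw [List.getLast?_cons_cons] at hb
      have hx : x ∉ y :: t := (List.nodup_cons.1 hnd).1
      have hxb : x < b := lt_of_le_of_ne hab fun h => hx (h ▸ List.mem_of_getLast? hb)
      have htail := eq_range'_of_isChain_unitStep hl.2 (List.nodup_cons.1 hnd).2 rfl hb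
      -- stepping down first would force the walk back through `x` on its way up to `b`
      obtain rfl : y = x + 1 := hl.1.resolve_right fun h =>
        hx (mem_of_isChain_unitStep hl.2 rfl hb (by omega) hxb.le)
      rw [htail hxb, show b + 1 - x = b + 1 - (x + 1) + 1 by omega, List.range'_succ]

section StepsAlong

variable {α : Type*} [DecidableEq α]

def StepsAlong (R : α → α → Prop) (P : List α) : Prop :=
  ∀ x y, R x y → x ∈ P → y ∈ P ∧ UnitStep (P.idxOf x) (P.idxOf y)

variable {R : α → α → Prop} {P l : List α}

theorem StepsAlong.forall_mem_of_isChain (hP : StepsAlong R P) (hl : l.IsChain R)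
    (hhead : l.head? = P.head?) : ∀ x ∈ l, x ∈ P :=
  hl.induction (· ∈ P) l (fun x y hxy hx => (hP x y hxy hx).1) fun hne => by
    rw [List.head?_eq_some_head hne] at hhead
    exact List.mem_of_mem_head? hhead.symm

theorem StepsAlong.isChain_map_idxOf (hP : StepsAlong R P) (hl : l.IsChain R)
    (hhead : l.head? = P.head?) : (l.map (List.idxOf · P)).IsChain UnitStep :=
  (List.isChain_map _).2 <| hl.imp_of_mem_imp fun x y hx _ hxy =>
    (hP x y hxy (hP.forall_mem_of_isChain hl hhead x hx)).2

theorem head?_map_idxOf_eq_zero (hPne : P ≠ []) (hhead : l.head? = P.head?) :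
    (l.map (List.idxOf · P)).head? = some 0 := by
  obtain ⟨p, P', rfl⟩ := List.exists_cons_of_ne_nil hPne
  simp [hhead]

theorem getLast?_map_idxOf_eq_length_sub_one (hPn : P.Nodup) (hPne : P ≠ [])
    (hlast : l.getLast? = P.getLast?) :
    (l.map (List.idxOf · P)).getLast? = some (P.length - 1) := by
  rw [List.getLast?_map, hlast, List.getLast?_eq_some_getLast hPne, List.getLast_eq_getElem]
  simp [hPn.idxOf_getElem]

theorem StepsAlong.subset_of_isChain (hP : StepsAlong R P) (hPn : P.Nodup) (hl : l.IsChain R)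
    (hhead : l.head? = P.head?) (hlast : l.getLast? = P.getLast?) : P ⊆ l := by
  intro x hx
  have hPne : P ≠ [] := List.ne_nil_of_mem hx
  have hidx : P.idxOf x ∈ l.map (List.idxOf · P) :=
    mem_of_isChain_unitStep (hP.isChain_map_idxOf hl hhead)
      (head?_map_idxOf_eq_zero hPne hhead) (getLast?_map_idxOf_eq_length_sub_one hPn hPne hlast)
      (Nat.zero_le _) (Nat.le_sub_one_of_lt (List.idxOf_lt_length_iff.2 hx))
  obtain ⟨y, hy, hyx⟩ := List.mem_map.1 hidx
  rwa [← (List.idxOf_inj hx).1 hyx.symm] at hy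

theorem StepsAlong.eq_of_isChain_of_nodup (hP : StepsAlong R P) (hPn : P.Nodup)
    (hl : l.IsChain R) (hln : l.Nodup) (hhead : l.head? = P.head?)
    (hlast : l.getLast? = P.getLast?) : l = P := by
  rcases eq_or_ne P [] with rfl | hPne
  · exact List.head?_eq_none_iff.1 hhead
  have hmem := hP.forall_mem_of_isChain hl hhead
  have hrange : l.map (List.idxOf · P) = List.range' 0 P.length := by
    have := eq_range'_of_isChain_unitStep (hP.isChain_map_idxOf hl hhead)
      (hln.map_on fun x hx y hy h => (List.idxOf_inj (hmem x hx)).1 h)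
      (head?_map_idxOf_eq_zero hPne hhead) (getLast?_map_idxOf_eq_length_sub_one hPn hPne hlast)
      (Nat.zero_le _)
    rwa [Nat.sub_add_cancel (List.length_pos_iff.2 hPne), Nat.sub_zero] at this
  have hlen : l.length = P.length := by simpa using congrArg List.length hrange
  refine List.ext_getElem hlen fun i hi hiP => ?_
  have hi' : P.idxOf l[i] = i := by
    have h := List.getElem_of_eq hrange (by simpa using hi)
    rwa [List.getElem_map, List.getElem_range', Nat.zero_add, Nat.one_mul] at h
  rw [← List.getElem_idxOf (List.idxOf_lt_length_iff.2 (hmem _ (List.getElem_mem hi)))]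
  simp only [hi']

end StepsAlong

section Bunkbed

variable {V : Type} [DecidableEq V] {Vs : Finset V} {E : Finset (V × V)} {H : Finset (BBEdge V)}

theorem mem_of_vert_mem_bbEdges {w : V} (h : BBEdge.vert w ∈ bbEdges Vs E) : w ∈ Vs := by
  simpa [bbEdges] using h

theorem mem_of_horiz_mem_bbEdges {u v : V} {ε : Bool} (h : BBEdge.horiz u v ε ∈ bbEdges Vs E) :
    (u, v) ∈ E := by
  simp only [bbEdges, Finset.mem_union, Finset.mem_image, reduceCtorEq, and_false,
    exists_false, BBEdge.horiz.injEq, false_or] at h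
  rcases h with ⟨p, hp, rfl, rfl, -⟩ | ⟨p, hp, rfl, rfl, -⟩ <;> exact hp

theorem mem_of_bbStep_of_vert_notMem (hH : H ⊆ bbEdges Vs E) {a b : V × Bool}
    (h : bbStep H a b) (ha : BBEdge.vert a.1 ∉ H) : (a.1, b.1) ∈ E := by
  rcases h with ⟨-, -, hv⟩ | ⟨-, hh⟩
  · exact absurd hv ha
  · exact mem_of_horiz_mem_bbEdges (hH hh)

theorem isChain_map_fst_of_forall_vert_notMem (hH : H ⊆ bbEdges Vs E) {l : List (V × Bool)}
    (hl : l.IsChain fun a b => bbStep H a b ∨ bbStep H b a)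
    (hno : ∀ a ∈ l, BBEdge.vert a.1 ∉ H) :
    (l.map Prod.fst).IsChain fun x y => (x, y) ∈ E ∨ (y, x) ∈ E :=
  (List.isChain_map _).2 <| hl.imp_of_mem_imp fun a b ha hb hab =>
    hab.imp (mem_of_bbStep_of_vert_notMem hH · (hno a ha))
      (mem_of_bbStep_of_vert_notMem hH · (hno b hb))

end Bunkbed

def AdjOffT1 (x y : ℕ) : Prop := ((x, y) ∈ E1 ∨ (y, x) ∈ E1) ∧ x ∉ T1 ∧ y ∉ T1

theorem isChain_adjOffT1 {l : List ℕ} (hl : l.IsChain fun x y => (x, y) ∈ E1 ∨ (y, x) ∈ E1)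
    (hT : ∀ x ∈ l, x ∉ T1) : l.IsChain AdjOffT1 :=
  hl.imp_of_mem_imp fun x y hx hy hxy => ⟨hxy, hT x hx, hT y hy⟩

theorem stepsAlong_adjOffT1 : StepsAlong AdjOffT1 [1, 4, 3, 7, 6, 9] := by
  have key : ∀ e ∈ E1, e.1 ∉ T1 → e.2 ∉ T1 →
      e.1 ∈ [1, 4, 3, 7, 6, 9] ∧ e.2 ∈ [1, 4, 3, 7, 6, 9] ∧
      UnitStep ([1, 4, 3, 7, 6, 9].idxOf e.1) ([1, 4, 3, 7, 6, 9].idxOf e.2) := by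
    unfold UnitStep; decide
  rintro x y ⟨hxy | hyx, hx, hy⟩ -
  · exact (key _ hxy hx hy).2
  · obtain ⟨hy, -, h⟩ := key _ hyx hy hx
    exact ⟨hy, h.symm⟩

/-- First conjunct: in the underlying undirected graph of `G₁`, every
path from `1` to `9` avoiding the vertices `2, 5, 8` is the unique such path
`1,4,3,7,6,9`, which passes through all of `3, 4, 6, 7`. Second conjunct:
consequently, for any subgraph `H` of the bunkbed graph of `G₁` whose post set
strictly contains `{2,5,8}`, every undirected path (indeed walk) in `H` from `1⁻`
to `9⁻` or `9⁺` passes through a post. -/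
theorem unique_avoiding_path_and_posts_cut :
    (∀ l : List ℕ,
      l.Chain' (fun x y => (x, y) ∈ E1 ∨ (y, x) ∈ E1) →
      l.head? = some 1 → l.getLast? = some 9 → l.Nodup →
      (∀ x ∈ l, x ∉ T1) → l = [1, 4, 3, 7, 6, 9]) ∧
    (∀ H : Finset (BBEdge ℕ), H ⊆ s1 → postCond T1 H →
      (∃ w : ℕ, w ∉ T1 ∧ BBEdge.vert w ∈ H) →
      ∀ (ε : Bool) (l : List (ℕ × Bool)),
        l.Chain' (fun a b => bbStep H a b ∨ bbStep H b a) →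
        l.head? = some (1, false) → l.getLast? = some (9, ε) →
        ∃ a ∈ l, BBEdge.vert a.1 ∈ H) := by
  refine ⟨fun l hl hhead hlast hnd hT => ?_, ?_⟩
  · exact stepsAlong_adjOffT1.eq_of_isChain_of_nodup (by decide) (isChain_adjOffT1 hl hT) hnd
      hhead hlast
  rintro H hH hT ⟨w, hwT, hw⟩ ε l hl hhead hlast
  by_contra! hno
  have hshadow := isChain_map_fst_of_forall_vert_notMem hH hl hno
  have hshadowT : ∀ x ∈ l.map Prod.fst, x ∉ T1 := by
    intro x hx hxT
    obtain ⟨a, ha, rfl⟩ := List.mem_map.1 hx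
    exact hno a ha (hT _ hxT)
  have hwP : w ∈ [1, 4, 3, 7, 6, 9] := by
    have hwV := mem_of_vert_mem_bbEdges (hH hw)
    simp only [V1, T1, Finset.mem_insert, Finset.mem_singleton] at hwV hwT
    simp only [List.mem_cons, List.not_mem_nil]
    omega
  obtain ⟨a, ha, rfl⟩ := List.mem_map.1 <| stepsAlong_adjOffT1.subset_of_isChain (by decide)
    (isChain_adjOffT1 hshadow hshadowT) (by simp [hhead]) (by simp [hlast]) hwP
  exact hno a ha hw
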